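/- There is no 16-vertex C4-free Halin graph whose characteristic tree has a longest path of length exactly 5. -/

import Mathlib

open SimpleGraph

/-- Degree of a vertex as the `ncard` of its neighbour set. -/
noncomputable def ncDeg {V : Type*} (G : SimpleGraph V) (v : V) : ℕ :=
  (G.neighborSet v).ncard

/-- A leaf is a vertex of degree one. -/
def IsLeaf {V : Type*} (G : SimpleGraph V) (v : V) : Prop :=
  ncDeg G v = 1

/-- A Halin graph, presented by its characteristic tree `T` and outer cycle `C`.
The underlying graph is `T ⊔ C`.  The outer cycle is a `2`-regular connected graph
whose support is exactly the set of leaves of `T`, every non-leaf of `T` has degree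
at least three, and the cycle is compatible with a planar embedding: for every edge
`uv` of `T`, the leaves lying in each component of `T - uv` are consecutive on the
cycle, i.e. they induce a connected subgraph of the cycle. -/
structure HalinGraph (V : Type*) [Fintype V] : Type _ where
  /-- the characteristic tree -/
  T : SimpleGraph V
  /-- the outer cycle -/
  C : SimpleGraph V
  tree_isTree : T.IsTree
  four_le_card : 4 ≤ Fintype.card V
  nonleaf_degree : ∀ v : V, ¬ IsLeaf T v → 3 ≤ ncDeg T v
  support_C : C.support = {v : V | IsLeaf T v}
  two_regular : ∀ v ∈ C.support, ncDeg C v = 2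
  cycle_connected : (C.induce C.support).Connected
  planar : ∀ u v : V, T.Adj u v →
    (C.induce {x : V | IsLeaf T x ∧ (T.deleteEdges {s(u, v)}).Reachable u x}).Connected

/-- The Halin graph itself: the (edge-disjoint) union of the tree and the outer cycle. -/
def HalinGraph.graph {V : Type*} [Fintype V] (H : HalinGraph V) : SimpleGraph V :=
  H.T ⊔ H.C

/-- Number of edges of a graph. -/
noncomputable def eCount {V : Type*} (G : SimpleGraph V) : ℕ :=
  G.edgeSet.ncard

/-- A graph is `C₄`-free iff it contains no cycle of length `4`. -/
def C4Free {V : Type*} (G : SimpleGraph V) : Prop :=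
  ∀ (v : V) (w : G.Walk v v), w.IsCycle → w.length ≠ 4

/-- A semi-branching vertex of the characteristic tree: a non-leaf with at least one
leaf neighbour and at least two non-leaf neighbours. -/
def SemiBranching {V : Type*} (T : SimpleGraph V) (v : V) : Prop :=
  ¬ IsLeaf T v ∧ (∃ x, T.Adj v x ∧ IsLeaf T x) ∧
    ∃ x y : V, x ≠ y ∧ T.Adj v x ∧ T.Adj v y ∧ ¬ IsLeaf T x ∧ ¬ IsLeaf T y

/-!
Let `v₀ ⋯ v₅` be a longest path of the characteristic tree `T`. By maximality, the branch at `v₂`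
away from `v₃` (and symmetrically the branch at `v₃` away from `v₂`) has height at most two.
The leaves of that branch are consecutive on the outer cycle and include `v₀`, at distance two
from `v₂`; if `v₂` had a leaf neighbour, some cycle edge would join a child and a grandchild of
`v₂`, closing a 4-cycle. So every child `x` of `v₂` is internal, and `x` has exactly two children,
since three consecutive ones `l₁ l₂ l₃` would close the 4-cycle `x l₁ l₂ l₃`. Each side of `v₂v₃`
thus has `3k + 1` vertices, so `|V| ≡ 2 (mod 3)`, which rules out `|V| = 16`.
-/
section

variable {V : Type*}

lemma IsLeaf.eq_of_adj {G : SimpleGraph V} {l x y : V} (hl : IsLeaf G l) (hx : G.Adj l x)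
    (hy : G.Adj l y) : x = y := by
  obtain ⟨z, hz⟩ := Set.ncard_eq_one.mp hl
  have hx' : x ∈ G.neighborSet l := hx
  have hy' : y ∈ G.neighborSet l := hy
  rw [hz] at hx' hy'
  exact hx'.trans hy'.symm

lemma exists_adj_ne_of_not_isLeaf {G : SimpleGraph V} {u w : V} (hu : ¬ IsLeaf G u)
    (hw : G.Adj u w) : ∃ z, G.Adj u z ∧ z ≠ w := by
  by_contra! h
  exact hu (Set.ncard_eq_one.mpr ⟨w, Set.eq_singleton_iff_unique_mem.mpr ⟨hw, h⟩⟩)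

lemma C4Free.not_square {G : SimpleGraph V} (hfree : C4Free G) {a b c d : V} (hac : a ≠ c)
    (hbd : b ≠ d) : ¬ (G.Adj a b ∧ G.Adj b c ∧ G.Adj c d ∧ G.Adj d a) := by
  rintro ⟨hab, hbc, hcd, hda⟩
  refine hfree a (.cons hab (.cons hbc (.cons hcd (.cons hda .nil)))) ?_ rfl
  simp [Walk.isCycle_def, Walk.isTrail_def, hab.ne, hbc.ne, hcd.ne, hda.ne, hab.ne', hda.ne',
    hac, hbd, hac.symm]

namespace SimpleGraph

variable {G : SimpleGraph V}

lemma Reachable.mem_of_adj_mem {S : Set V} (hS : ∀ x ∈ S, ∀ y, G.Adj x y → y ∈ S) {u w : V}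
    (hu : u ∈ S) (h : G.Reachable u w) : w ∈ S := by
  obtain ⟨p⟩ := h
  by_contra hw
  obtain ⟨d, -, hd, hd'⟩ := p.exists_boundary_dart S hu hw
  exact hd' (hS _ hd _ d.adj)

lemma Connected.exists_adj_adj_ne (hG : G.Connected) {a b c : V} (hab : a ≠ b) (hac : a ≠ c)
    (hbc : b ≠ c) : ∃ x y z, G.Adj x y ∧ G.Adj y z ∧ x ≠ z := by
  by_contra! h
  obtain ⟨y, hy⟩ := (hG a b).nonempty_neighborSet_left hab
  have hmem : ∀ w, w ∈ ({a, y} : Set V) := fun w ↦ by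
    refine (hG a w).mem_of_adj_mem ?_ (by simp)
    rintro _ (rfl | rfl) z hz
    · exact .inr (h y _ z hy.symm hz).symm
    · exact .inl (h a _ z hy hz).symm
  grind [hmem b, hmem c]

lemma IsAcyclic.isPath_cons (hG : G.IsAcyclic) {u v w : V} {p : G.Walk u v} (hp : p.IsPath)
    (h : G.Adj w u) (hw : w ≠ p.snd) : (Walk.cons h p).IsPath :=
  hp.cons fun hmem ↦ hw (hG.eq_snd_of_adj_start hp h.symm hmem)

lemma IsAcyclic.isLeaf_of_isPath_of_length_eq (hG : G.IsAcyclic) {m : ℕ}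
    (hmax : ∀ (a b : V) (p : G.Walk a b), p.IsPath → p.length ≤ m) (hm : 0 < m) {u v : V}
    {p : G.Walk u v} (hp : p.IsPath) (hlen : p.length = m) : IsLeaf G u := by
  by_contra hu
  have hnil : ¬ p.Nil := by rw [← Walk.length_eq_zero_iff]; omega
  obtain ⟨z, hz, hzs⟩ := exists_adj_ne_of_not_isLeaf hu (p.adj_snd hnil)
  have := hmax _ _ _ (hG.isPath_cons hp hz.symm hzs)
  simp only [Walk.length_cons] at this
  omega

def side (G : SimpleGraph V) (u v : V) : Set V :=
  {w | (G.deleteEdges {s(u, v)}).Reachable u w}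

lemma self_mem_side (u v : V) : u ∈ side G u v := Reachable.rfl

lemma mem_side_of_adj {u v w y : V} (hw : w ∈ side G u v) (hwy : G.Adj w y)
    (hne : s(w, y) ≠ s(u, v)) : y ∈ side G u v :=
  Reachable.trans hw (Adj.reachable (deleteEdges_adj.mpr ⟨hwy, hne⟩))

lemma mem_side_of_adj_of_ne {u v w y : V} (hw : w ∈ side G u v) (hwy : G.Adj w y) (hwu : w ≠ u)
    (hwv : w ≠ v) : y ∈ side G u v :=
  mem_side_of_adj hw hwy fun he ↦ (Sym2.mem_iff.mp (he ▸ Sym2.mem_mk_left w y)).elim hwu hwv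

lemma mem_side_or_mem_side_of_adj {u v a b : V} (ha : a ∈ side G u v) (hab : G.Adj a b) :
    b ∈ side G u v ∨ b ∈ side G v u := by
  by_cases he : s(a, b) = s(u, v)
  · rcases Sym2.eq_iff.mp he with ⟨-, rfl⟩ | ⟨-, rfl⟩
    · exact .inr (self_mem_side b u)
    · exact .inl (self_mem_side b v)
  · exact .inl (mem_side_of_adj ha hab he)

lemma side_union_side (hG : G.Connected) {u v : V} :
    side G u v ∪ side G v u = Set.univ := by
  refine Set.eq_univ_of_forall fun w ↦ (hG u w).mem_of_adj_mem ?_ (.inl (self_mem_side u v))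
  rintro a (ha | ha) b hab
  exacts [mem_side_or_mem_side_of_adj ha hab, (mem_side_or_mem_side_of_adj ha hab).symm]

lemma disjoint_side (hG : G.IsAcyclic) {u v : V} (huv : G.Adj u v) :
    Disjoint (side G u v) (side G v u) := by
  refine Set.disjoint_left.mpr fun w hu hv ↦ ?_
  have hbridge := isAcyclic_iff_forall_adj_isBridge.mp hG huv
  rw [isBridge_iff] at hbridge
  refine hbridge (hu.trans ?_)
  simpa [side, Sym2.eq_swap] using hv.symm

lemma ncard_side_add_ncard_side [Finite V] (hG : G.IsTree) {u v : V} (huv : G.Adj u v) :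
    (side G u v).ncard + (side G v u).ncard = Nat.card V := by
  rw [← Set.ncard_union_eq (disjoint_side hG.isAcyclic huv), side_union_side hG.connected,
    Set.ncard_univ]

def HeightLeTwo (G : SimpleGraph V) (u v : V) : Prop :=
  ∀ x ∈ G.neighborSet u \ {v}, ∀ y ∈ G.neighborSet x \ {u}, IsLeaf G y

lemma HeightLeTwo.mem_side {u v w : V} (h : HeightLeTwo G u v) (hw : w ∈ side G u v) :
    w = u ∨ w ∈ G.neighborSet u \ {v} ∨
      ∃ x ∈ G.neighborSet u \ {v}, w ∈ G.neighborSet x \ {u} := by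
  refine Reachable.mem_of_adj_mem (S := {w | w = u ∨ w ∈ G.neighborSet u \ {v} ∨
    ∃ x ∈ G.neighborSet u \ {v}, w ∈ G.neighborSet x \ {u}}) ?_ (.inl rfl) hw
  simp only [deleteEdges_adj, Set.mem_singleton_iff]
  rintro a (rfl | ha | ⟨x, hx, ha⟩) b ⟨hab, hne⟩
  · exact .inr (.inl ⟨hab, by rintro rfl; exact hne rfl⟩)
  · by_cases hbu : b = u
    · exact .inl hbu
    · exact .inr (.inr ⟨a, ha, hab, hbu⟩)
  · exact .inr (.inl ((h x hx a ha).eq_of_adj hab ha.1.symm ▸ hx))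

lemma neighborSet_diff_subset_side (u v : V) : G.neighborSet u \ {v} ⊆ side G u v :=
  fun _ hx ↦ mem_side_of_adj (self_mem_side u v) hx.1 fun he ↦ hx.2 (Sym2.congr_right.mp he)

lemma HeightLeTwo.ncard_side [Finite V] {u v : V} (h : HeightLeTwo G u v)
    (hX : ∀ x ∈ G.neighborSet u \ {v}, ¬ IsLeaf G x ∧ (G.neighborSet x \ {u}).ncard = 2) :
    (side G u v).ncard = 3 * (G.neighborSet u \ {v}).ncard + 1 := by
  set X := G.neighborSet u \ {v}
  set Y := ⋃ x ∈ X, G.neighborSet x \ {u}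
  have hside : side G u v = insert u (X ∪ Y) := by
    ext w
    constructor
    · intro hw
      rcases h.mem_side hw with rfl | hw | ⟨x, hx, hw⟩
      · exact Set.mem_insert _ _
      · exact .inr (.inl hw)
      · exact .inr (.inr (Set.mem_biUnion hx hw))
    · rintro (rfl | hw | hw)
      · exact self_mem_side w v
      · exact neighborSet_diff_subset_side u v hw
      · obtain ⟨x, hx, hw⟩ := Set.mem_iUnion₂.mp hw
        exact mem_side_of_adj_of_ne (neighborSet_diff_subset_side u v hx) hw.1 hx.1.ne' hx.2
  have hu : u ∉ X ∪ Y := by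
    rintro (hu | hu)
    · exact G.irrefl hu.1
    · obtain ⟨x, -, hu⟩ := Set.mem_iUnion₂.mp hu
      exact hu.2 rfl
  have hdisj : Disjoint X Y := by
    refine Set.disjoint_left.mpr fun w hw hwY ↦ ?_
    obtain ⟨x, hx, hwx⟩ := Set.mem_iUnion₂.mp hwY
    exact (hX w hw).1 (h x hx w hwx)
  have hpair : X.PairwiseDisjoint fun x ↦ G.neighborSet x \ {u} :=
    fun x hx x' _ hne ↦ Set.disjoint_left.mpr fun y hy hy' ↦
      hne ((h x hx y hy).eq_of_adj hy.1.symm hy'.1.symm)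
  have hY : Y.ncard = 2 * X.ncard := by
    rw [Set.Finite.ncard_biUnion (Set.toFinite X) (fun _ _ ↦ Set.toFinite _) hpair,
      finsum_mem_congr rfl fun x hx ↦ (hX x hx).2, ← finsum_one, mul_finsum_mem, mul_one]
  rw [hside, Set.ncard_insert_of_notMem hu, Set.ncard_union_eq hdisj, hY]
  ring

lemma IsAcyclic.heightLeTwo (hG : G.IsAcyclic) {u b : V} {q : G.Walk u b} (hq : q.IsPath)
    (hmax : ∀ (a b : V) (p : G.Walk a b), p.IsPath → p.length ≤ q.length + 2) :
    HeightLeTwo G u q.snd := by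
  rintro x ⟨hux, hxq⟩ y ⟨hxy, hyu⟩
  have hp := hG.isPath_cons (hG.isPath_cons hq hux.symm hxq) hxy.symm (by simpa using hyu)
  exact hG.isLeaf_of_isPath_of_length_eq hmax (by omega) hp (by simp)

end SimpleGraph

namespace HalinGraph

variable [Fintype V] (H : HalinGraph V)

lemma ncard_neighborSet_diff_eq_two (hfree : C4Free H.graph) {x c : V} (hxc : H.T.Adj x c)
    (hx : ¬ IsLeaf H.T x) (hleaf : ∀ w ∈ H.T.neighborSet x \ {c}, IsLeaf H.T w) :
    (H.T.neighborSet x \ {c}).ncard = 2 := by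
  have hheight : HeightLeTwo H.T x c := fun t ht y hy ↦
    absurd ((hleaf t ht).eq_of_adj hy.1 ht.1.symm) hy.2
  have hleaves : {w | IsLeaf H.T w ∧ w ∈ side H.T x c} = H.T.neighborSet x \ {c} := by
    ext w
    refine ⟨fun ⟨hw, hws⟩ ↦ ?_, fun hw ↦ ⟨hleaf w hw, neighborSet_diff_subset_side x c hw⟩⟩
    rcases hheight.mem_side hws with rfl | hw' | ⟨t, ht, hwt⟩
    · exact absurd hw hx
    · exact hw'
    · exact absurd ((hleaf t ht).eq_of_adj hwt.1 ht.1.symm) hwt.2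
  have hconn : (H.C.induce {w | IsLeaf H.T w ∧ w ∈ side H.T x c}).Connected := H.planar x c hxc
  rw [hleaves] at hconn
  have hdeg : 3 ≤ (H.T.neighborSet x).ncard := H.nonleaf_degree x hx
  have hdiff := Set.ncard_sdiff_singleton_add_one (show c ∈ H.T.neighborSet x from hxc)
    (Set.toFinite _)
  refine le_antisymm ?_ (by omega)
  by_contra! h3
  obtain ⟨a, b, d, ha, hb, hd, hab, had, hbd⟩ := (Set.two_lt_ncard_iff).mp h3
  obtain ⟨l₁, l₂, l₃, h₁₂, h₂₃, h₁₃⟩ := hconn.exists_adj_adj_ne (a := ⟨a, ha⟩) (b := ⟨b, hb⟩)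
    (c := ⟨d, hd⟩) (by simpa) (by simpa) (by simpa)
  exact hfree.not_square l₂.2.1.ne (Subtype.coe_ne_coe.mpr h₁₃)
    ⟨.inl l₁.2.1, .inr h₁₂, .inr h₂₃, .inl l₃.2.1.symm⟩

lemma not_isLeaf_of_heightLeTwo (hfree : C4Free H.graph) {u v : V} (huv : H.T.Adj u v)
    (hheight : HeightLeTwo H.T u v) {w : V} (hw : IsLeaf H.T w) (hws : w ∈ side H.T u v)
    (huw : ¬ H.T.Adj u w) {l : V} (hl : l ∈ H.T.neighborSet u \ {v}) : ¬ IsLeaf H.T l := by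
  intro hll
  have hconn : (H.C.induce {w | IsLeaf H.T w ∧ w ∈ side H.T u v}).Connected := H.planar u v huv
  -- some step of the outer cycle from `w` to `l` goes from a grandchild `x` of `u` to a child `y`,
  -- and then `u y x t` is a 4-cycle, `t` being the parent of `x`
  obtain ⟨p⟩ := hconn.preconnected ⟨w, hw, hws⟩ ⟨l, hll, neighborSet_diff_subset_side u v hl⟩
  obtain ⟨⟨⟨⟨x, hxl, hxs⟩, ⟨y, hyl, _⟩⟩, hxy⟩, -, hx, hy⟩ :=
    p.exists_boundary_dart {z | ¬ H.T.Adj u z} huw (not_not.mpr hl.1)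
  change ¬ H.T.Adj u x at hx
  change ¬ ¬ H.T.Adj u y at hy
  rcases hheight.mem_side hxs with rfl | hxu | ⟨t, ht, hxt⟩
  · exact hl.2 (hxl.eq_of_adj hl.1 huv)
  · exact hx hxu.1
  · refine hfree.not_square (Ne.symm hxt.2) (fun hyt ↦ hxt.2 ?_)
      ⟨.inl (not_not.mp hy), .inr hxy.symm, .inl hxt.1.symm, .inl ht.1.symm⟩
    subst hyt
    exact hyl.eq_of_adj hxt.1 ht.1.symm

lemma ncard_side_of_isPath (hfree : C4Free H.graph)
    (hmax : ∀ (a b : V) (p : H.T.Walk a b), p.IsPath → p.length ≤ 5) {v₀ v₁ v₂ v₃ v₄ v₅ : V}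
    (h₀₁ : H.T.Adj v₀ v₁) (h₁₂ : H.T.Adj v₁ v₂) (h₂₃ : H.T.Adj v₂ v₃) (h₃₄ : H.T.Adj v₃ v₄)
    (h₄₅ : H.T.Adj v₄ v₅) (hp : (Walk.cons h₀₁ (.cons h₁₂ (.cons h₂₃ (.cons h₃₄
      (.cons h₄₅ .nil))))).IsPath) :
    (side H.T v₂ v₃).ncard = 3 * (H.T.neighborSet v₂ \ {v₃}).ncard + 1 := by
  have hT := H.tree_isTree.isAcyclic
  have hheight : HeightLeTwo H.T v₂ v₃ := hT.heightLeTwo hp.of_cons.of_cons hmax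
  have h₁₃ : v₁ ≠ v₃ := by
    rintro rfl
    simp at hp
  have hv₀ : IsLeaf H.T v₀ := hT.isLeaf_of_isPath_of_length_eq hmax (by norm_num) hp rfl
  have hv₀s : v₀ ∈ side H.T v₂ v₃ := mem_side_of_adj_of_ne
    (neighborSet_diff_subset_side v₂ v₃ ⟨h₁₂.symm, h₁₃⟩) h₀₁.symm h₁₂.ne h₁₃
  have h₂₀ : ¬ H.T.Adj v₂ v₀ := fun h ↦ h₁₂.ne (hv₀.eq_of_adj h₀₁ h.symm)
  refine hheight.ncard_side fun x hx ↦ ?_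
  have hxl := H.not_isLeaf_of_heightLeTwo hfree h₂₃ hheight hv₀ hv₀s h₂₀ hx
  exact ⟨hxl, H.ncard_neighborSet_diff_eq_two hfree hx.1.symm hxl (hheight x hx)⟩

theorem card_mod_three_eq_two (hfree : C4Free H.graph)
    (hex : ∃ (a b : V) (p : H.T.Walk a b), p.IsPath ∧ p.length = 5)
    (hmax : ∀ (a b : V) (p : H.T.Walk a b), p.IsPath → p.length ≤ 5) :
    Fintype.card V % 3 = 2 := by
  obtain ⟨a, b, p, hp, hlen⟩ := hex
  rcases p with _ | ⟨h₀₁, _ | ⟨h₁₂, _ | ⟨h₂₃, _ | ⟨h₃₄, _ | ⟨h₄₅, _ | ⟨_, _⟩⟩⟩⟩⟩⟩ <;>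
    simp at hlen
  have h₂ := H.ncard_side_of_isPath hfree hmax h₀₁ h₁₂ h₂₃ h₃₄ h₄₅ hp
  have h₃ := H.ncard_side_of_isPath hfree hmax h₄₅.symm h₃₄.symm h₂₃.symm h₁₂.symm h₀₁.symm
    hp.reverse
  have hsum := ncard_side_add_ncard_side H.tree_isTree h₂₃
  rw [Nat.card_eq_fintype_card] at hsum
  omega

end HalinGraph

end

/-- There is no `16`-vertex `C₄`-free Halin graph whose characteristic tree has a
longest path of length exactly `5`. -/
theorem halin_sixteen_no_longest_five {V : Type*} [Fintype V]
    (hcard : Fintype.card V = 16) (H : HalinGraph V) (hfree : C4Free H.graph)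
    (hex : ∃ (a b : V) (p : H.T.Walk a b), p.IsPath ∧ p.length = 5)
    (hmax : ∀ (a b : V) (p : H.T.Walk a b), p.IsPath → p.length ≤ 5) :
    False := by
  have := H.card_mod_three_eq_two hfree hex hmax
  omega
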